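/- Let d: ℝᵖ → ℝ be concave differentiable with L-Lipschitz gradient, and suppose for a point μ there exist a value d̄(μ) and vector g(μ) such that d(λ) ≤ d̄(μ) + ⟨g(μ), λ - μ⟩ for all λ (an inexact supergradient inequality), 0 ≤ d̄(μ) - d(μ) ≤ ε, and ‖g(μ) - ∇d(μ)‖ ≤ √(2Lε). Then for all λ: d(λ) ≥ d̄(μ) + ⟨g(μ), λ - μ⟩ - L‖λ - μ‖² - 2ε. -/

import Mathlib

/-! The descent lemma for an `L`-smooth function gives
`d λ ≥ d μ + ⟪∇d μ, λ - μ⟫ - L/2 ‖λ - μ‖²`. Replacing `d μ` by `d̄(μ)` costs `ε`, and replacing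
`∇d μ` by `g(μ)` costs, by AM-GM and `‖g(μ) - ∇d μ‖ ≤ √(2Lε)`, at most `ε + L/2 ‖λ - μ‖²`. -/

open RealInnerProductSpace

section

variable {E : Type*} [NormedAddCommGroup E] [InnerProductSpace ℝ E] [CompleteSpace E]

theorem HasGradientAt.hasDerivAt_comp_add_smul {f : E → ℝ} {g x v : E} {t : ℝ}
    (hf : HasGradientAt f g (x + t • v)) :
    HasDerivAt (fun s : ℝ => f (x + s • v)) ⟪g, v⟫ t := by
  have hline : HasDerivAt (fun s : ℝ => x + s • v) v t := by
    simpa using ((hasDerivAt_id t).smul_const v).const_add x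
  simpa [Function.comp_def] using hf.hasFDerivAt.comp_hasDerivAt t hline

theorem quadratic_lower_bound_of_lipschitz_gradient {f : E → ℝ} {f' : E → E} {L : ℝ}
    (hf : ∀ x, HasGradientAt f (f' x) x) (hlip : ∀ x y, ‖f' x - f' y‖ ≤ L * ‖x - y‖)
    (x y : E) :
    f x + ⟪f' x, y - x⟫ - L / 2 * ‖y - x‖ ^ 2 ≤ f y := by
  set v := y - x
  -- the slack of the bound along the segment; `ψ' ≥ 0` on `t ≥ 0` since `∇f` is `L`-Lipschitz
  set ψ : ℝ → ℝ := fun t => f (x + t • v) - t * ⟪f' x, v⟫ + L / 2 * t ^ 2 * ‖v‖ ^ 2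
  have hψ : ∀ t, HasDerivAt ψ (⟪f' (x + t • v) - f' x, v⟫ + L * t * ‖v‖ ^ 2) t := by
    intro t
    have hsq := ((hasDerivAt_pow 2 t).const_mul (L / 2)).mul_const (‖v‖ ^ 2)
    refine (((hf _).hasDerivAt_comp_add_smul.sub ((hasDerivAt_id t).mul_const _)).add
      hsq).congr_deriv ?_
    rw [inner_sub_left]
    ring
  have hψ' : ∀ t ∈ interior (Set.Ici (0 : ℝ)),
      0 ≤ ⟪f' (x + t • v) - f' x, v⟫ + L * t * ‖v‖ ^ 2 := by
    intro t ht
    rw [interior_Ici, Set.mem_Ioi] at ht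
    have hstep : ‖f' (x + t • v) - f' x‖ ≤ L * t * ‖v‖ := by
      simpa [norm_smul, abs_of_pos ht, mul_assoc] using hlip (x + t • v) x
    calc 0 = -(L * t * ‖v‖ * ‖v‖) + L * t * ‖v‖ ^ 2 := by ring
      _ ≤ -(‖f' (x + t • v) - f' x‖ * ‖v‖) + L * t * ‖v‖ ^ 2 := by
        gcongr
      _ ≤ ⟪f' (x + t • v) - f' x, v⟫ + L * t * ‖v‖ ^ 2 := by
        gcongr
        exact neg_le_of_abs_le (abs_real_inner_le_norm _ _)
  have hmono := monotoneOn_of_hasDerivWithinAt_nonneg (convex_Ici 0)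
    (fun t _ => (hψ t).continuousAt.continuousWithinAt) (fun t _ => (hψ t).hasDerivWithinAt) hψ'
  have := hmono Set.self_mem_Ici (Set.mem_Ici.2 zero_le_one) zero_le_one
  simp only [ψ, v, zero_smul, one_smul, add_zero, add_sub_cancel] at this
  linarith

end

theorem inner_le_add_half_mul_sq {E : Type*} [NormedAddCommGroup E] [InnerProductSpace ℝ E]
    {a v : E} {L eps : ℝ} (hL : 0 < L) (heps : 0 ≤ eps) (ha : ‖a‖ ≤ √(2 * L * eps)) :
    ⟪a, v⟫ ≤ eps + L / 2 * ‖v‖ ^ 2 := by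
  have hsq : √(2 * L * eps) ^ 2 = 2 * L * eps := Real.sq_sqrt (by positivity)
  -- AM-GM: `2 L (√(2 L ε) ‖v‖) ≤ √(2 L ε) ^ 2 + (L ‖v‖) ^ 2`.
  have hamgm : √(2 * L * eps) * ‖v‖ ≤ eps + L / 2 * ‖v‖ ^ 2 := by
    refine le_of_mul_le_mul_left ?_ (by positivity : 0 < 2 * L)
    nlinarith [sq_nonneg (√(2 * L * eps) - L * ‖v‖)]
  calc ⟪a, v⟫ ≤ ‖a‖ * ‖v‖ := real_inner_le_norm a v
    _ ≤ √(2 * L * eps) * ‖v‖ := by gcongr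
    _ ≤ eps + L / 2 * ‖v‖ ^ 2 := hamgm

theorem stmt_2_general {p : ℕ} (d : EuclideanSpace ℝ (Fin p) → ℝ)
    (gd : EuclideanSpace ℝ (Fin p) → EuclideanSpace ℝ (Fin p)) (L eps : ℝ)
    (hL : 0 < L)
    (hgrad : ∀ x, HasGradientAt d (gd x) x)
    (hlip : ∀ x y, ‖gd x - gd y‖ ≤ L * ‖x - y‖)
    (mu : EuclideanSpace ℝ (Fin p)) (db : ℝ) (gv : EuclideanSpace ℝ (Fin p))
    (hval : 0 ≤ db - d mu ∧ db - d mu ≤ eps)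
    (hgv : ‖gv - gd mu‖ ≤ Real.sqrt (2 * L * eps)) :
    ∀ lam, d lam ≥ db + ⟪gv, lam - mu⟫ - L * ‖lam - mu‖ ^ 2 - 2 * eps := by
  intro lam
  have hdescent := quadratic_lower_bound_of_lipschitz_gradient hgrad hlip mu lam
  have herr : ⟪gv - gd mu, lam - mu⟫ ≤ eps + L / 2 * ‖lam - mu‖ ^ 2 :=
    inner_le_add_half_mul_sq hL (hval.1.trans hval.2) hgv
  rw [inner_sub_left] at herr
  linarith [hval.2]

/-- Inexact descent lemma (Lemma 2). -/
theorem stmt_2 {p : ℕ} (d : EuclideanSpace ℝ (Fin p) → ℝ)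
    (gd : EuclideanSpace ℝ (Fin p) → EuclideanSpace ℝ (Fin p)) (L eps : ℝ)
    (hL : 0 < L) (heps : 0 < eps)
    (hconc : ConcaveOn ℝ Set.univ d)
    (hgrad : ∀ x, HasGradientAt d (gd x) x)
    (hlip : ∀ x y, ‖gd x - gd y‖ ≤ L * ‖x - y‖)
    (mu : EuclideanSpace ℝ (Fin p)) (db : ℝ) (gv : EuclideanSpace ℝ (Fin p))
    (hsupper : ∀ lam, d lam ≤ db + ⟪gv, lam - mu⟫)
    (hval : 0 ≤ db - d mu ∧ db - d mu ≤ eps)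
    (hgv : ‖gv - gd mu‖ ≤ Real.sqrt (2 * L * eps)) :
    ∀ lam, d lam ≥ db + ⟪gv, lam - mu⟫ - L * ‖lam - mu‖ ^ 2 - 2 * eps :=
  stmt_2_general d gd L eps hL hgrad hlip mu db gv hval hgv
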